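/- arXiv:1012.5196 — 3 statements merged into one kernel-verified Lean document; each statement's English description precedes it below -/
import Mathlib

section
/- A *-algebra A is a Baer *-algebra if and only if A is a Rickart *-algebra whose lattice of projections is complete. -/
/-!
Order projections by `e ≤ f ↔ e = e * f`. In a Baer *-algebra the infimum of a family `Q` of
projections is the projection generating the right annihilator of `{1 - e | e ∈ Q}`, since a
projection `t` lies below `e` exactly when `(1 - e) * t = 0`; suprema follow by taking
complements. Conversely, in a Rickart *-algebra write `R({s}) = e_s A` and let `i` be the infimum
of the `e_s`, `s ∈ S`. Then `x ∈ R(S)` iff `e_s x = x` for all `s`, iff the left projection of `x`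
(the complement of the projection generating `R({x*})`) lies below every `e_s`, iff `i x = x`;
hence `R(S) = i A`.
-/

section
variable {A : Type*} [Ring A] [Algebra ℂ A] [StarRing A]

/-- `e` is a projection: self-adjoint idempotent. -/
def IsProjection (e : A) : Prop := star e = e ∧ e * e = e

/-- Right annihilator of a subset. -/
def RightAnn (S : Set A) : Set A := {x : A | ∀ s ∈ S, s * x = 0}

/-- Baer *-algebra. -/
def IsBaerStar (A : Type*) [Ring A] [Algebra ℂ A] [StarRing A] : Prop :=
  ∀ S : Set A, S.Nonempty → ∃ e : A, IsProjection e ∧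
    RightAnn S = {x : A | ∃ a : A, x = e * a}

/-- Rickart *-algebra. -/
def IsRickartStar (A : Type*) [Ring A] [Algebra ℂ A] [StarRing A] : Prop :=
  ∀ x : A, ∃ e : A, IsProjection e ∧
    RightAnn {x} = {y : A | ∃ a : A, y = e * a}

/-- `s` is the supremum of the set of projections `Q` in the order e ≤ f iff e = ef. -/
def IsProjSup (Q : Set A) (s : A) : Prop :=
  IsProjection s ∧ (∀ e ∈ Q, e = e * s) ∧
    ∀ t : A, IsProjection t → (∀ e ∈ Q, e = e * t) → s = s * t

/-- `i` is the infimum of the set of projections `Q`. -/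
def IsProjInf (Q : Set A) (i : A) : Prop :=
  IsProjection i ∧ (∀ e ∈ Q, i = i * e) ∧
    ∀ t : A, IsProjection t → (∀ e ∈ Q, t = t * e) → t = t * i

end

section Ring

variable {A : Type*} [Ring A]

lemma mem_rightAnn_singleton {x y : A} : y ∈ RightAnn {x} ↔ x * y = 0 := by
  simp [RightAnn]

lemma eq_mul_iff_mul_one_sub_eq_zero {e f : A} : e = e * f ↔ e * (1 - f) = 0 := by
  rw [mul_sub, mul_one, sub_eq_zero, eq_comm]

end Ring

section Projection

variable {A : Type*} [Ring A] [StarRing A]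

namespace IsProjection

variable {e f x : A}

lemma one : IsProjection (1 : A) := ⟨star_one A, one_mul 1⟩

lemma one_sub (he : IsProjection e) : IsProjection (1 - e) := by
  refine ⟨by rw [star_sub, star_one, he.1], ?_⟩
  rw [sub_mul, mul_sub, mul_sub, he.2]
  simp

lemma star_mul_eq_zero_iff (he : IsProjection e) : star x * e = 0 ↔ e * x = 0 := by
  rw [← star_eq_zero, star_mul, star_star, he.1]

lemma exists_eq_mul_iff (he : IsProjection e) : (∃ a, x = e * a) ↔ e * x = x :=
  ⟨fun ⟨a, hx⟩ => by rw [hx, ← mul_assoc, he.2], fun hx => ⟨x, hx.symm⟩⟩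

lemma eq_mul_iff_eq_mul_left (he : IsProjection e) (hf : IsProjection f) :
    e = e * f ↔ e = f * e := by
  constructor <;> intro h <;> simpa only [star_mul, he.1, hf.1] using congrArg star h

lemma one_sub_mul_eq_zero_iff (he : IsProjection e) (hf : IsProjection f) :
    (1 - f) * e = 0 ↔ e = e * f := by
  rw [eq_mul_iff_mul_one_sub_eq_zero, ← hf.one_sub.star_mul_eq_zero_iff, he.1]

lemma one_sub_le_one_sub_iff (he : IsProjection e) (hf : IsProjection f) :
    1 - f = (1 - f) * (1 - e) ↔ e = e * f := by
  rw [eq_mul_iff_mul_one_sub_eq_zero, sub_sub_cancel, one_sub_mul_eq_zero_iff he hf]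

end IsProjection

variable {Q : Set A}

lemma mem_rightAnn_image_one_sub_iff (hQ : ∀ e ∈ Q, IsProjection e) {t : A}
    (ht : IsProjection t) : t ∈ RightAnn ((1 - ·) '' Q) ↔ ∀ e ∈ Q, t = t * e := by
  simp only [RightAnn, Set.mem_ofPred_eq, Set.forall_mem_image]
  exact forall₂_congr fun e he => ht.one_sub_mul_eq_zero_iff (hQ e he)

lemma isProjInf_of_rightAnn_eq (hQ : ∀ e ∈ Q, IsProjection e) {g : A} (hg : IsProjection g)
    (hgR : RightAnn ((1 - ·) '' Q) = {x | ∃ a, x = g * a}) : IsProjInf Q g := by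
  have hmem : ∀ t, t ∈ RightAnn ((1 - ·) '' Q) ↔ g * t = t := fun t => by
    rw [hgR, Set.mem_ofPred_eq, hg.exists_eq_mul_iff]
  refine ⟨hg, (mem_rightAnn_image_one_sub_iff hQ hg).1 ((hmem g).2 hg.2), fun t ht htQ => ?_⟩
  rw [ht.eq_mul_iff_eq_mul_left hg]
  exact ((hmem t).1 ((mem_rightAnn_image_one_sub_iff hQ ht).2 htQ)).symm

lemma IsProjInf.one_sub_isProjSup (hQ : ∀ e ∈ Q, IsProjection e) {i : A}
    (hi : IsProjInf ((1 - ·) '' Q) i) : IsProjSup Q (1 - i) := by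
  have hi' : IsProjection (1 - i) := hi.1.one_sub
  refine ⟨hi', fun e he => ?_, fun t ht htQ => ?_⟩
  · rw [← (hQ e he).one_sub_le_one_sub_iff hi', sub_sub_cancel]
    exact hi.2.1 _ ⟨e, he, rfl⟩
  · rw [← hi'.one_sub_le_one_sub_iff ht, sub_sub_cancel]
    refine hi.2.2 _ ht.one_sub ?_
    rintro _ ⟨e, he, rfl⟩
    exact ((hQ e he).one_sub_le_one_sub_iff ht).2 (htQ e he)

def IsLeftProjection (x f : A) : Prop :=
  IsProjection f ∧ f * x = x ∧ ∀ p, IsProjection p → p * x = x → f = f * p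

lemma IsProjInf.mul_eq_self_iff (hQ : ∀ e ∈ Q, IsProjection e) {i x f : A}
    (hi : IsProjInf Q i) (hf : IsLeftProjection x f) : i * x = x ↔ ∀ e ∈ Q, e * x = x := by
  constructor
  · intro hix e he
    have hei : e * i = i := ((hi.1.eq_mul_iff_eq_mul_left (hQ e he)).1 (hi.2.1 e he)).symm
    rw [← hix, ← mul_assoc, hei]
  · intro hQx
    have hfi : f = f * i := hi.2.2 f hf.1 fun e he => hf.2.2 e (hQ e he) (hQx e he)
    have hif : i * f = f := ((hf.1.eq_mul_iff_eq_mul_left hi.1).1 hfi).symm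
    rw [← hf.2.1, ← mul_assoc, hif]

end Projection

section Algebra

variable {A : Type*} [Ring A] [Algebra ℂ A] [StarRing A]

lemma IsBaerStar.isRickartStar (hB : IsBaerStar A) : IsRickartStar A :=
  fun x => hB {x} ⟨x, rfl⟩

lemma IsBaerStar.exists_isProjInf (hB : IsBaerStar A) {Q : Set A}
    (hQ : ∀ e ∈ Q, IsProjection e) : ∃ i, IsProjInf Q i := by
  rcases Q.eq_empty_or_nonempty with rfl | hne
  · exact ⟨1, IsProjection.one, by simp, fun t _ _ => (mul_one t).symm⟩
  obtain ⟨g, hg, hgR⟩ := hB _ (hne.image _)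
  exact ⟨g, isProjInf_of_rightAnn_eq hQ hg hgR⟩

lemma IsBaerStar.exists_isProjSup (hB : IsBaerStar A) {Q : Set A}
    (hQ : ∀ e ∈ Q, IsProjection e) : ∃ s, IsProjSup Q s := by
  obtain ⟨i, hi⟩ := hB.exists_isProjInf (Q := (1 - ·) '' Q) (by
    rintro _ ⟨e, he, rfl⟩
    exact (hQ e he).one_sub)
  exact ⟨1 - i, hi.one_sub_isProjSup hQ⟩

lemma IsRickartStar.exists_isLeftProjection (hR : IsRickartStar A) (x : A) :
    ∃ f, IsLeftProjection x f := by
  obtain ⟨h, hh, hhR⟩ := hR (star x)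
  have hmem : ∀ y, star x * y = 0 ↔ h * y = y := fun y => by
    rw [← mem_rightAnn_singleton, hhR, Set.mem_ofPred_eq, hh.exists_eq_mul_iff]
  have hhx : h * x = 0 := hh.star_mul_eq_zero_iff.1 ((hmem h).2 hh.2)
  refine ⟨1 - h, hh.one_sub, by rw [sub_mul, one_mul, hhx, sub_zero], fun p hp hpx => ?_⟩
  have hpx' : (1 - p) * x = 0 := by rw [sub_mul, one_mul, hpx, sub_self]
  have hhp : h * (1 - p) = 1 - p := (hmem _).1 (hp.one_sub.star_mul_eq_zero_iff.2 hpx')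
  rw [eq_mul_iff_mul_one_sub_eq_zero, sub_mul, one_mul, hhp, sub_self]

lemma IsRickartStar.isBaerStar (hR : IsRickartStar A)
    (hinf : ∀ Q : Set A, (∀ e ∈ Q, IsProjection e) → ∃ i, IsProjInf Q i) : IsBaerStar A := by
  intro S _
  choose f hf using hR.exists_isLeftProjection
  choose ep hep hepR using hR
  obtain ⟨i, hi⟩ := hinf (ep '' S) (by rintro _ ⟨s, -, rfl⟩; exact hep s)
  refine ⟨i, hi.1, Set.ext fun x => ?_⟩
  rw [Set.mem_ofPred_eq, hi.1.exists_eq_mul_iff,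
    hi.mul_eq_self_iff (by rintro _ ⟨s, -, rfl⟩; exact hep s) (hf x), Set.forall_mem_image]
  refine forall₂_congr fun s _ => ?_
  rw [← mem_rightAnn_singleton, hepR s, Set.mem_ofPred_eq, (hep s).exists_eq_mul_iff]

end Algebra

/-- A is Baer iff A is Rickart with complete projection lattice. -/
theorem baer_iff_rickart_and_complete_projection_lattice
    (A : Type*) [Ring A] [Algebra ℂ A] [StarRing A] :
    IsBaerStar A ↔
      (IsRickartStar A ∧
        ∀ Q : Set A, (∀ e ∈ Q, IsProjection e) →
          (∃ s : A, IsProjSup Q s) ∧ (∃ i : A, IsProjInf Q i)) :=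
  ⟨fun hB => ⟨hB.isRickartStar, fun _ hQ => ⟨hB.exists_isProjSup hQ, hB.exists_isProjInf hQ⟩⟩,
    fun ⟨hR, hC⟩ => hR.isBaerStar fun Q hQ => (hC Q hQ).2⟩
end

section
/- If A is a Rickart *-algebra in which every family of pairwise orthogonal projections has a supremum in the projection lattice, then A is a Baer *-algebra. -/
section
variable {A : Type*} [Ring A] [StarRing A]

namespace IsProjection

variable {p q : A}

theorem star_mul_eq (hp : IsProjection p) (hq : IsProjection q) : star (p * q) = q * p := by
  rw [star_mul, hp.1, hq.1]

theorem mul_eq_zero_symm (hp : IsProjection p) (hq : IsProjection q) (h : p * q = 0) :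
    q * p = 0 := by
  rw [← hp.star_mul_eq hq, h, star_zero]

theorem eq_mul_comm (hp : IsProjection p) (hq : IsProjection q) : p = p * q ↔ p = q * p := by
  constructor <;> intro h
  · rw [← hp.star_mul_eq hq, ← h, hp.1]
  · rw [← hq.star_mul_eq hp, ← h, hp.1]

theorem one_sub_s7 (hp : IsProjection p) : IsProjection (1 - p) := by
  refine ⟨by rw [star_sub, star_one, hp.1], ?_⟩
  rw [sub_mul, one_mul, mul_sub, mul_one, hp.2, sub_self, sub_zero]

end IsProjection

namespace IsRickartStar

variable [Algebra ℂ A]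

theorem exists_rightAnn_projection (hR : IsRickartStar A) (s : A) :
    ∃ e : A, IsProjection e ∧ s * e = 0 ∧ ∀ x, s * x = 0 → e * x = x := by
  obtain ⟨e, he, hann⟩ := hR s
  have mem_iff (x : A) : s * x = 0 ↔ ∃ a, x = e * a := by
    simpa [RightAnn] using Set.ext_iff.1 hann x
  refine ⟨e, he, (mem_iff e).2 ⟨e, he.2.symm⟩, fun x hx => ?_⟩
  obtain ⟨a, rfl⟩ := (mem_iff x).1 hx
  rw [← mul_assoc, he.2]

theorem exists_left_projection (hR : IsRickartStar A) (y : A) :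
    ∃ e : A, IsProjection e ∧ e * y = y ∧ ∀ z, z * y = 0 → z * e = 0 := by
  obtain ⟨f, hf, hyf, hmax⟩ := hR.exists_rightAnn_projection (star y)
  refine ⟨1 - f, hf.one_sub_s7, ?_, fun z hz => ?_⟩
  · have h : star y * (1 - f) = star y := by rw [mul_sub, mul_one, hyf, sub_zero]
    rw [← hf.one_sub_s7.1, ← star_star y, ← star_mul, h]
  · have h : (1 - f) * star z = 0 := by
      rw [sub_mul, one_mul, hmax (star z) (by rw [← star_mul, hz, star_zero]), sub_self]
    rw [← hf.one_sub_s7.1, ← star_star z, ← star_mul, h, star_zero]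

end IsRickartStar

def IsOrthoProjFamilyIn (T Q : Set A) : Prop :=
  (∀ e ∈ Q, IsProjection e ∧ e ∈ T) ∧ Q.Pairwise (fun e f => e * f = 0)

theorem exists_maximal_orthoProjFamilyIn (T : Set A) :
    ∃ Q, Maximal (IsOrthoProjFamilyIn T) Q := by
  refine zorn_subset {Q | IsOrthoProjFamilyIn T Q} fun c hc hchain => ?_
  refine ⟨⋃₀ c, ⟨?_, ?_⟩, fun Q hQ => Set.subset_sUnion_of_mem hQ⟩
  · rintro e ⟨Q, hQ, he⟩
    exact (hc hQ).1 e he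
  · exact (Set.pairwise_sUnion hchain.directedOn).2 fun Q hQ => (hc hQ).2

theorem IsProjSup.mem_rightAnn [Algebra ℂ A] (hR : IsRickartStar A) {S Q : Set A} {g : A}
    (hQ : ∀ e ∈ Q, IsProjection e ∧ e ∈ RightAnn S) (hg : IsProjSup Q g) :
    g ∈ RightAnn S := by
  intro s hs
  obtain ⟨e, he, hse, hmax⟩ := hR.exists_rightAnn_projection s
  have hge : g = g * e := hg.2.2 e he fun q hq =>
    ((hQ q hq).1.eq_mul_comm he).2 (hmax q ((hQ q hq).2 s hs)).symm
  rw [(hg.1.eq_mul_comm he).1 hge, ← mul_assoc, hse, zero_mul]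

theorem IsProjSup.eq_mul_of_mem_rightAnn [Algebra ℂ A] (hR : IsRickartStar A)
    {S Q : Set A} {g x : A}
    (hQ : Maximal (IsOrthoProjFamilyIn (RightAnn S)) Q) (hg : IsProjSup Q g)
    (hx : x ∈ RightAnn S) : x = g * x := by
  set y := x - g * x
  have hyS : y ∈ RightAnn S := fun s hs => by
    rw [mul_sub, hx s hs, ← mul_assoc, hg.mem_rightAnn hR hQ.prop.1 s hs, zero_mul, sub_zero]
  have hgy : g * y = 0 := by rw [mul_sub, ← mul_assoc, hg.1.2, sub_self]
  obtain ⟨e, he, hey, hleast⟩ := hR.exists_left_projection y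
  have heS : e ∈ RightAnn S := fun s hs => hleast s (hyS s hs)
  have hge : g * e = 0 := hleast g hgy
  have hqe : ∀ q ∈ Q, q * e = 0 := fun q hq => by rw [hg.2.1 q hq, mul_assoc, hge, mul_zero]
  have heQ : e ∈ Q := by
    refine hQ.mem_of_prop_insert ⟨?_, Set.pairwise_insert.2 ⟨hQ.prop.2, fun q hq _ => ?_⟩⟩
    · rintro f (rfl | hf)
      exacts [⟨he, heS⟩, hQ.prop.1 f hf]
    · exact ⟨(hQ.prop.1 q hq).1.mul_eq_zero_symm he (hqe q hq), hqe q hq⟩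
  have he0 : e = 0 := by rw [hg.2.1 e heQ, hg.1.mul_eq_zero_symm he hge]
  have hy0 : y = 0 := by rw [← hey, he0, zero_mul]
  exact sub_eq_zero.1 hy0

end

/-- Rickart + sups of orthogonal families of projections ⟹ Baer. -/
theorem rickart_orthogonal_sups_implies_baer
    (A : Type*) [Ring A] [Algebra ℂ A] [StarRing A]
    (hR : IsRickartStar A)
    (hsup : ∀ Q : Set A, (∀ e ∈ Q, IsProjection e) →
      (∀ e ∈ Q, ∀ f ∈ Q, e ≠ f → e * f = 0) → ∃ s : A, IsProjSup Q s) :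
    IsBaerStar A := by
  intro S _
  obtain ⟨Q, hQ⟩ := exists_maximal_orthoProjFamilyIn (RightAnn S)
  obtain ⟨g, hg⟩ := hsup Q (fun e he => (hQ.prop.1 e he).1) hQ.prop.2
  refine ⟨g, hg.1, Set.ext fun x => ⟨fun hx => ?_, ?_⟩⟩
  · exact ⟨x, hg.eq_mul_of_mem_rightAnn hR hQ hx⟩
  · rintro ⟨a, rfl⟩ s hs
    rw [← mul_assoc, hg.mem_rightAnn hR hQ.prop.1 s hs, zero_mul]
end

section
/- In a Baer *-ring, if e_λ (λ ∈ Γ) is a family of projections with supremum e, and x is an element commuting with every e_λ (x e_λ = e_λ x for all λ), then x commutes with e: xe = ex. -/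
/-!
Let `g` be the projection with `R({e_λ}) = gA`. Since `1 - g` is an upper bound of the `e_λ`
and `1 - e` annihilates every `e_λ`, the supremum is `e = 1 - g`. As `x` and `x*` commute with
every `e_λ`, both map `R({e_λ})` into itself, i.e. `x g = g x g` and `x* g = g x* g`; taking
adjoints in the second identity gives `g x = g x g`, so `x` commutes with `g`, hence with `e`.
-/

namespace IsStarProjection

variable {A : Type*} [Ring A] [StarRing A]

theorem commute_of_mul_eq_mul_mul {g x : A} (hg : IsStarProjection g)
    (hx : x * g = g * x * g) (hxs : star x * g = g * star x * g) : Commute x g := by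
  have hgx : g * x = g * x * g := by
    simpa only [star_mul, star_star, hg.isSelfAdjoint.star_eq, mul_assoc] using
      congrArg star hxs
  exact hx.trans hgx.symm

variable {Γ : Type*} {f : Γ → A} {g : A}

theorem apply_mul_eq_zero (hg : IsStarProjection g)
    (hann : ∀ y, (∀ i, f i * y = 0) ↔ g * y = y) (i : Γ) : f i * g = 0 :=
  (hann g).2 hg.isIdempotentElem.eq i

theorem mul_eq_mul_mul_of_forall_commute (hg : IsStarProjection g)
    (hann : ∀ y, (∀ i, f i * y = 0) ↔ g * y = y) {z : A} (hz : ∀ i, Commute z (f i)) :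
    z * g = g * z * g := by
  have hzg : ∀ i, f i * (z * g) = 0 := fun i => by
    rw [← mul_assoc, ← (hz i).eq, mul_assoc, apply_mul_eq_zero hg hann i, mul_zero]
  rw [mul_assoc, (hann _).1 hzg]

theorem commute_of_forall_commute (hg : IsStarProjection g)
    (hann : ∀ y, (∀ i, f i * y = 0) ↔ g * y = y) (hf : ∀ i, IsSelfAdjoint (f i)) {x : A}
    (hx : ∀ i, Commute x (f i)) : Commute x g := by
  have hxs : ∀ i, Commute (star x) (f i) := fun i => by
    simpa only [(hf i).star_eq] using (hx i).star_star
  exact hg.commute_of_mul_eq_mul_mul (mul_eq_mul_mul_of_forall_commute hg hann hx)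
    (mul_eq_mul_mul_of_forall_commute hg hann hxs)

theorem eq_one_sub_of_isLUB (hg : IsStarProjection g)
    (hann : ∀ y, (∀ i, f i * y = 0) ↔ g * y = y) {e : A} (he : IsSelfAdjoint e)
    (hub : ∀ i, f i = f i * e)
    (hlub : ∀ p : A, IsStarProjection p → (∀ i, f i = f i * p) → e = e * p) :
    e = 1 - g := by
  have heg : e * g = 0 := by
    have h := hlub (1 - g) hg.one_sub fun i => by
      rw [mul_sub, mul_one, apply_mul_eq_zero hg hann i, sub_zero]
    rw [mul_sub, mul_one] at h
    exact sub_eq_self.1 h.symm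
  have hg1e : g * (1 - e) = 1 - e :=
    (hann _).1 fun i => by rw [mul_sub, mul_one, ← hub i, sub_self]
  have h1eg : (1 - e) * g = 1 - e := by
    simpa only [star_mul, star_sub, star_one, he.star_eq, hg.isSelfAdjoint.star_eq] using
      congrArg star hg1e
  rw [sub_mul, one_mul, heg, sub_zero] at h1eg
  rw [h1eg, sub_sub_cancel]

end IsStarProjection

theorem forall_mul_eq_zero_iff_mul_eq_self {A : Type*} [Ring A] {Γ : Type*} {f : Γ → A} {g : A}
    (hg : IsIdempotentElem g)
    (hann : {y : A | ∀ s ∈ insert 0 (Set.range f), s * y = 0} = {y : A | ∃ a : A, y = g * a})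
    (y : A) : (∀ i, f i * y = 0) ↔ g * y = y := by
  have hy := Set.ext_iff.1 hann y
  simp only [Set.mem_ofPred_eq, Set.forall_mem_insert, zero_mul, true_and,
    Set.forall_mem_range] at hy
  rw [hy]
  constructor
  · rintro ⟨a, rfl⟩
    rw [← mul_assoc, hg.eq]
  · exact fun h => ⟨y, h.symm⟩

/-- in a Baer *-ring, an element commuting with each projection of a
family commutes with their supremum. -/
theorem commutes_with_sup_of_family
    {A : Type*} [Ring A] [StarRing A]
    (hBaer : ∀ S : Set A, S.Nonempty → ∃ g : A,
      (star g = g ∧ g * g = g) ∧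
        {y : A | ∀ s ∈ S, s * y = 0} = {y : A | ∃ a : A, y = g * a})
    {Γ : Type*} (eΛ : Γ → A)
    (hproj : ∀ lam : Γ, star (eΛ lam) = eΛ lam ∧ eΛ lam * eΛ lam = eΛ lam)
    (e : A) (he : star e = e ∧ e * e = e)
    (hub : ∀ lam : Γ, eΛ lam = eΛ lam * e)
    (hlub : ∀ f : A, (star f = f ∧ f * f = f) → (∀ lam : Γ, eΛ lam = eΛ lam * f) →
      e = e * f)
    (x : A) (hx : ∀ lam : Γ, x * eΛ lam = eΛ lam * x) :
    x * e = e * x := by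
  -- adjoining `0` does not change the annihilator but makes the set nonempty even if `Γ` is empty
  obtain ⟨g, ⟨hgs, hgg⟩, hann⟩ := hBaer (insert 0 (Set.range eΛ)) (Set.insert_nonempty _ _)
  have hg : IsStarProjection g := ⟨hgg, hgs⟩
  have hann_iff := forall_mul_eq_zero_iff_mul_eq_self hg.isIdempotentElem hann
  have hsup : e = 1 - g := hg.eq_one_sub_of_isLUB hann_iff he.1 hub
    fun p hp => hlub p ⟨hp.isSelfAdjoint, hp.isIdempotentElem⟩
  have hxg : Commute x g := hg.commute_of_forall_commute hann_iff (fun i => (hproj i).1) hx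
  rw [hsup]
  exact ((Commute.one_right x).sub_right hxg).eq
end
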